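/- Let X be a real random variable on a probability space with X > 0 almost surely, and suppose there exist constants C ≥ 0 and b > 0 such that ℙ(X ≤ t) ≤ C·e^{−b/t} for all t > 0. Then for every a with 0 < a < b one has E[e^{a/X}] ≤ 1 + C·a·( a/(b−a)² + 1/(b−a) ). In particular e^{a/X} is integrable. -/

import Mathlib

open MeasureTheory Set

/-!
The tail hypothesis turns into a Pareto tail for `Y = e^{a/X}`: for `t > 1`,
`{t ≤ Y} ⊆ {X ≤ a / log t}`, so `ℙ(t ≤ Y) ≤ C e^{-(b/a) log t} = C t^{-b/a}`.
By the layer-cake formula `E[Y] ≤ 1 + ∫_1^∞ ℙ(t ≤ Y) dt ≤ 1 + C/(b/a - 1) = 1 + C a/(b - a)`.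
-/

section

variable {Ω : Type*} [MeasurableSpace Ω] {P : Measure Ω}

lemma lintegral_ofReal_le_one_add_setLIntegral_Ioi_one_meas_le [IsProbabilityMeasure P]
    {f : Ω → ℝ} (hf_nonneg : 0 ≤ᵐ[P] f) (hf : AEMeasurable f P) :
    ∫⁻ ω, ENNReal.ofReal (f ω) ∂P ≤ 1 + ∫⁻ t in Ioi 1, P {ω | t ≤ f ω} := by
  have h_Ioc : ∫⁻ t in Ioc 0 1, P {ω | t ≤ f ω} ≤ 1 :=
    calc ∫⁻ t in Ioc 0 1, P {ω | t ≤ f ω}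
        ≤ ∫⁻ _ in Ioc (0 : ℝ) 1, 1 := lintegral_mono fun _ ↦ prob_le_one
      _ = 1 := by simp
  calc ∫⁻ ω, ENNReal.ofReal (f ω) ∂P
      = ∫⁻ t in Ioc 0 1 ∪ Ioi 1, P {ω | t ≤ f ω} := by
        rw [lintegral_eq_lintegral_meas_le P hf_nonneg hf, Ioc_union_Ioi_eq_Ioi zero_le_one]
    _ ≤ _ := (lintegral_union_le _ _ _).trans (add_le_add_left h_Ioc _)

lemma setLIntegral_Ioi_one_ofReal_mul_rpow_neg {C p : ℝ} (hC : 0 ≤ C) (hp : 1 < p) :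
    ∫⁻ t in Ioi 1, ENNReal.ofReal (C * t ^ (-p)) = ENNReal.ofReal (C / (p - 1)) := by
  have h_int : IntegrableOn (fun t : ℝ ↦ C * t ^ (-p)) (Ioi 1) :=
    (integrableOn_Ioi_rpow_of_lt (by linarith) one_pos).const_mul C
  have h_nonneg : 0 ≤ᵐ[volume.restrict (Ioi 1)] fun t : ℝ ↦ C * t ^ (-p) :=
    ae_restrict_of_forall_mem measurableSet_Ioi fun t ht ↦
      mul_nonneg hC (Real.rpow_nonneg (zero_le_one.trans (le_of_lt ht)) _)
  rw [← ofReal_integral_eq_lintegral_ofReal h_int h_nonneg, integral_const_mul,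
    integral_Ioi_rpow_of_lt (by linarith) one_pos, Real.one_rpow,
    show -p + 1 = -(p - 1) by ring, div_neg, neg_div, neg_neg, mul_one_div]

lemma integrable_and_integral_le_of_meas_le_mul_rpow_neg [IsProbabilityMeasure P]
    {f : Ω → ℝ} (hf_nonneg : 0 ≤ᵐ[P] f) (hf : AEStronglyMeasurable f P)
    {C p : ℝ} (hC : 0 ≤ C) (hp : 1 < p)
    (h_tail : ∀ t, 1 < t → P {ω | t ≤ f ω} ≤ ENNReal.ofReal (C * t ^ (-p))) :
    Integrable f P ∧ ∫ ω, f ω ∂P ≤ 1 + C / (p - 1) := by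
  have h_lint : ∫⁻ ω, ENNReal.ofReal (f ω) ∂P ≤ ENNReal.ofReal (1 + C / (p - 1)) :=
    calc ∫⁻ ω, ENNReal.ofReal (f ω) ∂P
        ≤ 1 + ∫⁻ t in Ioi 1, P {ω | t ≤ f ω} :=
          lintegral_ofReal_le_one_add_setLIntegral_Ioi_one_meas_le hf_nonneg hf.aemeasurable
      _ ≤ 1 + ∫⁻ t in Ioi 1, ENNReal.ofReal (C * t ^ (-p)) := by
          gcongr 1 + ?_
          exact setLIntegral_mono (by fun_prop) h_tail
      _ = ENNReal.ofReal (1 + C / (p - 1)) := by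
          rw [setLIntegral_Ioi_one_ofReal_mul_rpow_neg hC hp,
            ENNReal.ofReal_add zero_le_one (div_nonneg hC (by linarith)), ENNReal.ofReal_one]
  have h_int : Integrable f P :=
    (lintegral_ofReal_ne_top_iff_integrable hf hf_nonneg).mp
      (ne_top_of_le_ne_top ENNReal.ofReal_ne_top h_lint)
  refine ⟨h_int, ?_⟩
  rw [integral_eq_lintegral_of_nonneg_ae hf_nonneg hf]
  have h_bound_nonneg : 0 ≤ 1 + C / (p - 1) := by
    have := div_nonneg hC (sub_nonneg.mpr hp.le); linarith
  exact ENNReal.toReal_le_of_le_ofReal h_bound_nonneg h_lint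

lemma meas_le_exp_div_le_meas_le_div_log {X : Ω → ℝ} (hX_pos : ∀ᵐ ω ∂P, 0 < X ω)
    (a : ℝ) {t : ℝ} (ht : 1 < t) :
    P {ω | t ≤ Real.exp (a / X ω)} ≤ P {ω | X ω ≤ a / Real.log t} := by
  refine measure_mono_ae (hX_pos.mono fun ω hω h_le ↦ ?_)
  have h_log : Real.log t ≤ a / X ω := by
    simpa using Real.log_le_log (zero_lt_one.trans ht) h_le
  change X ω ≤ a / Real.log t
  rw [le_div_iff₀ (Real.log_pos ht)]
  rwa [le_div_iff₀ hω, mul_comm] at h_log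

lemma meas_le_exp_div_le_ofReal_mul_rpow_neg [IsFiniteMeasure P] {X : Ω → ℝ}
    (hX_pos : ∀ᵐ ω ∂P, 0 < X ω) {C b a : ℝ} (ha : 0 < a)
    (htail : ∀ t : ℝ, 0 < t → (P {ω | X ω ≤ t}).toReal ≤ C * Real.exp (-b / t))
    {t : ℝ} (ht : 1 < t) :
    P {ω | t ≤ Real.exp (a / X ω)} ≤ ENNReal.ofReal (C * t ^ (-(b / a))) := by
  have h_rpow : Real.exp (-b / (a / Real.log t)) = t ^ (-(b / a)) := by
    rw [Real.rpow_def_of_pos (zero_lt_one.trans ht)]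
    congr 1
    field_simp
  calc P {ω | t ≤ Real.exp (a / X ω)} ≤ P {ω | X ω ≤ a / Real.log t} :=
        meas_le_exp_div_le_meas_le_div_log hX_pos a ht
    _ ≤ ENNReal.ofReal (C * t ^ (-(b / a))) := by
        rw [← h_rpow, ← ENNReal.ofReal_toReal (measure_ne_top P _)]
        exact ENNReal.ofReal_le_ofReal (htail _ (div_pos ha (Real.log_pos ht)))

end

theorem integral_exp_inv_le_of_tail_bound_general
    {Ω : Type*} [MeasurableSpace Ω] (P : Measure Ω) [IsProbabilityMeasure P]
    (X : Ω → ℝ) (hX : Measurable X) (hX_pos : ∀ᵐ ω ∂P, 0 < X ω)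
    (C b : ℝ) (hC : 0 ≤ C)
    (htail : ∀ t : ℝ, 0 < t → (P {ω | X ω ≤ t}).toReal ≤ C * Real.exp (-b / t))
    (a : ℝ) (ha : 0 < a) (hab : a < b) :
    Integrable (fun ω => Real.exp (a / X ω)) P ∧
      ∫ ω, Real.exp (a / X ω) ∂P ≤
        1 + C * a * (a / (b - a) ^ 2 + 1 / (b - a)) := by
  obtain ⟨h_int, h_le⟩ := integrable_and_integral_le_of_meas_le_mul_rpow_neg
    (ae_of_all _ fun ω ↦ (Real.exp_pos _).le) (hX.const_div a).exp.aestronglyMeasurable hC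
    ((one_lt_div ha).mpr hab) fun _ ↦ meas_le_exp_div_le_ofReal_mul_rpow_neg hX_pos ha htail
  refine ⟨h_int, h_le.trans ?_⟩
  have h_eq : C / (b / a - 1) = C * a * (1 / (b - a)) := by
    field_simp
  have h_extra_nonneg : 0 ≤ C * a * (a / (b - a) ^ 2) := by positivity
  rw [h_eq, mul_add]
  linarith

/-- Let `X > 0` a.s. be a real random variable with small-value tail bound
`ℙ(X ≤ t) ≤ C·e^{−b/t}` for all `t > 0` (`C ≥ 0`, `b > 0`). Then for every
`0 < a < b`, the random variable `e^{a/X}` is integrable and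
`E[e^{a/X}] ≤ 1 + C·a·(a/(b−a)² + 1/(b−a))`. -/
theorem integral_exp_inv_le_of_tail_bound
    {Ω : Type*} [MeasurableSpace Ω] (P : Measure Ω) [IsProbabilityMeasure P]
    (X : Ω → ℝ) (hX : Measurable X) (hX_pos : ∀ᵐ ω ∂P, 0 < X ω)
    (C b : ℝ) (hC : 0 ≤ C) (hb : 0 < b)
    (htail : ∀ t : ℝ, 0 < t → (P {ω | X ω ≤ t}).toReal ≤ C * Real.exp (-b / t))
    (a : ℝ) (ha : 0 < a) (hab : a < b) :
    Integrable (fun ω => Real.exp (a / X ω)) P ∧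
      ∫ ω, Real.exp (a / X ω) ∂P ≤
        1 + C * a * (a / (b - a) ^ 2 + 1 / (b - a)) :=
  integral_exp_inv_le_of_tail_bound_general P X hX hX_pos C b hC htail a ha hab
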